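/- Fix n, d, s ∈ ℕ with n ≥ 1, s even, 2 ≤ s ≤ d, and fix ε > 0 and σ > 0. Assume 2n·log 2 + log 2 ≤ (1/2) · log(C(d,s) · C(s, s/2)). Then for every measurable estimator β̂ : ℝ^{n×d} × ℝ^n → ℝ^d, under the joint law in which β* is uniform on F₃(d,s,ε), X ∈ ℝ^{n×d} has i.i.d. entries gaussianReal 0 (1/n), e ∈ ℝ^n has i.i.d. entries gaussianReal 0 σ², and β*, X, e are mutually independent, the probability that β̂(X, sign(X·β* + e)) ≠ β* is at least 1/2. -/

import Mathlib

open MeasureTheory ProbabilityTheory Real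
open scoped ENNReal NNReal

/-- The sign function, with `sign x = 1` for `x ≥ 0` and `-1` otherwise. -/
noncomputable def signFun (x : ℝ) : ℝ := if 0 ≤ x then 1 else -1

/-- The restricted ensemble `F₃(d,s,ε)` for one-bit compressed sensing. -/
noncomputable def F3 (d s : ℕ) (ε : ℝ) : Set (Fin d → ℝ) :=
  {β | ∃ A B : Finset (Fin d), Disjoint A B ∧ A.card = s / 2 ∧ B.card = s / 2 ∧
    (∀ i ∈ A, β i = -ε) ∧ (∀ i ∈ B, β i = Real.sqrt (2 / s) + ε) ∧
    ∀ i ∉ A ∪ B, β i = 0}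

/-!
For fixed `(X, e)` the observation `sign (X β + e)` takes at most `2 ^ n` values, so an estimator
returns the correct vector for at most `2 ^ n` points of `F₃(d,s,ε)`. The hypothesis on the
binomial coefficients gives `|F₃(d,s,ε)| ≥ C(d,s) C(s,s/2) ≥ 2 ^ (4n+2)`, so conditionally on
`(X, e)` a uniformly drawn `β*` is recovered with probability at most `1/2`; Fubini's theorem
integrates this bound over `(X, e)`.
-/

theorem Set.ncard_inter_fixedPoints_comp_le {α γ : Type*} [Finite γ] (S : Set α)
    (f : α → γ) (g : γ → α) : (S ∩ Function.fixedPoints (g ∘ f)).ncard ≤ Nat.card γ := by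
  rw [← Set.ncard_univ]
  refine Set.ncard_le_ncard_of_injOn f (fun _ _ => Set.mem_univ _) ?_
  intro a ha b hb hab
  rw [← ha.2, ← hb.2, Function.comp_apply, hab, Function.comp_apply]

theorem uniformOn_fixedPoints_comp_le {α γ : Type*} [MeasurableSpace α]
    [MeasurableSingletonClass α] [Finite γ] {S : Set α} (hS : S.Finite) (f : α → γ)
    (g : γ → α) : uniformOn S (Function.fixedPoints (g ∘ f)) ≤ Nat.card γ / S.ncard := by
  have hST := hS.inter_of_left (Function.fixedPoints (g ∘ f))
  rw [uniformOn, cond_apply hS.measurableSet, Measure.count_apply hST.measurableSet,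
    Measure.count_apply hS.measurableSet, ← hS.cast_ncard_eq, ← hST.cast_ncard_eq,
    ENat.toENNReal_coe, ENat.toENNReal_coe, ENNReal.div_eq_inv_mul]
  gcongr
  exact S.ncard_inter_fixedPoints_comp_le f g

theorem one_sub_le_prod_apply_of_forall_slice_compl_le {α β : Type*} [MeasurableSpace α]
    [MeasurableSpace β] {μ : Measure α} {ν : Measure β} [IsProbabilityMeasure μ]
    [IsProbabilityMeasure ν] {E : Set (α × β)} (hE : MeasurableSet E) {c : ℝ≥0∞}
    (h : ∀ y, μ {x | (x, y) ∉ E} ≤ c) : 1 - c ≤ μ.prod ν E := by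
  have hcompl : μ.prod ν Eᶜ ≤ c := by
    rw [Measure.prod_apply_symm hE.compl]
    calc ∫⁻ y, μ ((fun x => (x, y)) ⁻¹' Eᶜ) ∂ν ≤ ∫⁻ _, c ∂ν := lintegral_mono h
      _ = c := by simp
  rw [prob_compl_eq_one_sub hE, tsub_le_iff_right] at hcompl
  exact tsub_le_iff_left.mpr hcompl

theorem Nat.two_pow_le_of_mul_log_two_le {k N : ℕ} (hk : 0 < k)
    (h : k * Real.log 2 ≤ Real.log N) : 2 ^ k ≤ N := by
  have hN : (0 : ℝ) < N := by
    rcases N.eq_zero_or_pos with rfl | hN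
    · have : (0 : ℝ) < k * Real.log 2 := by positivity
      simp only [Nat.cast_zero, Real.log_zero] at h
      linarith
    · exact_mod_cast hN
  exact_mod_cast (Real.pow_le_iff_le_log (by norm_num) hN).mpr h

section TwoLevel

variable {ι : Type*} [DecidableEq ι] {a b : ℝ} {U A : Finset ι}

def twoLevelVec (a b : ℝ) (U A : Finset ι) : ι → ℝ :=
  fun i => if i ∈ A then a else if i ∈ U then b else 0

theorem twoLevelVec_eq_left_iff (ha : a ≠ 0) (hab : a ≠ b) (i : ι) :
    twoLevelVec a b U A i = a ↔ i ∈ A := by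
  unfold twoLevelVec
  split_ifs <;> simp_all [Ne.symm ha, Ne.symm hab]

theorem twoLevelVec_ne_zero_iff (ha : a ≠ 0) (hb : b ≠ 0) (hA : A ⊆ U) (i : ι) :
    twoLevelVec a b U A i ≠ 0 ↔ i ∈ U := by
  unfold twoLevelVec
  split_ifs with hiA hiU
  · simp [ha, hA hiA]
  · simp [hb, hiU]
  · simp [hiU]

theorem twoLevelVec_inj (ha : a ≠ 0) (hb : b ≠ 0) (hab : a ≠ b) {U' A' : Finset ι}
    (hA : A ⊆ U) (hA' : A' ⊆ U') (h : twoLevelVec a b U A = twoLevelVec a b U' A') :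
    U = U' ∧ A = A' := by
  constructor <;> ext i
  · rw [← twoLevelVec_ne_zero_iff ha hb hA, h, twoLevelVec_ne_zero_iff ha hb hA']
  · rw [← twoLevelVec_eq_left_iff ha hab, h, twoLevelVec_eq_left_iff ha hab]

end TwoLevel

section F3

variable {d s : ℕ} {ε : ℝ}

theorem F3_finite : (F3 d s ε).Finite := by
  refine (Set.Finite.pi (t := fun _ => {-ε, √(2 / s) + ε, 0}) fun _ => by simp).subset ?_
  rintro β ⟨A, B, -, -, -, hA, hB, hrest⟩ i -
  by_cases hiA : i ∈ A
  · simp [hA i hiA]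
  by_cases hiB : i ∈ B
  · simp [hB i hiB]
  · simp [hrest i (by simp [hiA, hiB])]

theorem twoLevelVec_mem_F3 (heven : Even s) {U A : Finset (Fin d)} (hU : U.card = s)
    (hAU : A ⊆ U) (hA : A.card = s / 2) : twoLevelVec (-ε) (√(2 / s) + ε) U A ∈ F3 d s ε := by
  refine ⟨A, U \ A, Finset.disjoint_sdiff, hA, ?_, fun i hi => if_pos hi, fun i hi => ?_,
    fun i hi => ?_⟩
  · rw [Finset.card_sdiff_of_subset hAU, hU, hA]
    obtain ⟨k, rfl⟩ := heven
    omega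
  · rw [Finset.mem_sdiff] at hi
    exact (if_neg hi.2).trans (if_pos hi.1)
  · rw [Finset.union_sdiff_of_subset hAU] at hi
    exact (if_neg fun h => hi (hAU h)).trans (if_neg hi)

theorem choose_mul_choose_le_ncard_F3 (heven : Even s) (hε : 0 < ε) :
    d.choose s * s.choose (s / 2) ≤ (F3 d s ε).ncard := by
  have hb : 0 < √(2 / s) + ε := by positivity
  let params :=
    (Finset.univ.powersetCard s).sigma fun U : Finset (Fin d) => U.powersetCard (s / 2)
  have hparams : (params : Set (Σ _ : Finset (Fin d), Finset (Fin d))).ncard =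
      d.choose s * s.choose (s / 2) := by
    rw [Set.ncard_coe_finset, Finset.card_sigma, Finset.sum_const_nat fun U hU => ?_,
      Finset.card_powersetCard, Finset.card_univ, Fintype.card_fin]
    rw [Finset.card_powersetCard, (Finset.mem_powersetCard.mp hU).2]
  rw [← hparams]
  refine Set.ncard_le_ncard_of_injOn (fun p => twoLevelVec (-ε) (√(2 / s) + ε) p.1 p.2)
    ?_ ?_ F3_finite
  · rintro ⟨U, A⟩ hp
    simp only [params, Finset.coe_sigma, Set.mem_sigma_iff, Finset.mem_coe,
      Finset.mem_powersetCard] at hp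
    exact twoLevelVec_mem_F3 heven hp.1.2 hp.2.1 hp.2.2
  · rintro ⟨U, A⟩ hp ⟨U', A'⟩ hp' h
    simp only [params, Finset.coe_sigma, Set.mem_sigma_iff, Finset.mem_coe,
      Finset.mem_powersetCard] at hp hp'
    obtain ⟨rfl, rfl⟩ := twoLevelVec_inj (by linarith) hb.ne' (by linarith) hp.2.1 hp'.2.1 h
    rfl

end F3

@[fun_prop]
theorem measurable_signFun : Measurable signFun :=
  Measurable.ite measurableSet_Ici measurable_const measurable_const

theorem signFun_eq_ite_decide (x : ℝ) : signFun x = if decide (0 ≤ x) then 1 else -1 := by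
  simp only [signFun, decide_eq_true_eq]

theorem uniformOn_signFun_recovered_le_half {n d : ℕ} {S : Set (Fin d → ℝ)} (hS : S.Finite)
    (hcard : 2 ^ (n + 1) ≤ S.ncard) (est : (Fin n → Fin d → ℝ) × (Fin n → ℝ) → (Fin d → ℝ))
    (X : Fin n → Fin d → ℝ) (e : Fin n → ℝ) :
    uniformOn S {β | est (X, fun i => signFun (∑ j, X i j * β j + e i)) = β} ≤ 1 / 2 := by
  let bits : (Fin d → ℝ) → (Fin n → Bool) := fun β i => decide (0 ≤ ∑ j, X i j * β j + e i)
  let decode : (Fin n → Bool) → (Fin d → ℝ) := fun b => est (X, fun i => if b i then 1 else -1)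
  have hset : {β | est (X, fun i => signFun (∑ j, X i j * β j + e i)) = β} =
      Function.fixedPoints (decode ∘ bits) := by
    ext β
    simp only [signFun_eq_ite_decide]
    rfl
  have hpow : (2 : ℝ≥0∞) ^ n ≤ 1 / 2 * S.ncard := by
    calc (2 : ℝ≥0∞) ^ n = 1 / 2 * 2 ^ (n + 1) := by
          rw [pow_succ, mul_comm, mul_assoc, one_div, ENNReal.mul_inv_cancel, mul_one] <;> simp
      _ ≤ 1 / 2 * S.ncard := by gcongr; exact_mod_cast hcard
  calc uniformOn S {β | est (X, fun i => signFun (∑ j, X i j * β j + e i)) = β}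
      ≤ Nat.card (Fin n → Bool) / S.ncard := hset ▸ uniformOn_fixedPoints_comp_le hS bits decode
    _ ≤ 1 / 2 := by
      rw [Nat.card_fun, Nat.card_eq_fintype_card, Fintype.card_bool, Nat.card_eq_fintype_card,
        Fintype.card_fin]
      exact ENNReal.div_le_of_le_mul (by exact_mod_cast hpow)

theorem onebit_cs_exact_recovery_lower_bound_general
    (n d s : ℕ) (heven : Even s)
    (ε σ : ℝ) (hε : 0 < ε)
    (hbound : 2 * (n : ℝ) * Real.log 2 + Real.log 2 ≤
      (1 / 2) * Real.log ((d.choose s : ℝ) * (s.choose (s / 2) : ℝ)))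
    (est : (Fin n → Fin d → ℝ) × (Fin n → ℝ) → (Fin d → ℝ))
    (hest : Measurable est) :
    (1 / 2 : ℝ≥0∞) ≤
      ((uniformOn (F3 d s ε)).prod
          ((Measure.pi fun _ : Fin n => Measure.pi fun _ : Fin d =>
              gaussianReal 0 (1 / (n : ℝ≥0))).prod
            (Measure.pi fun _ : Fin n => gaussianReal 0 ⟨σ ^ 2, sq_nonneg σ⟩)))
        {ω : (Fin d → ℝ) × ((Fin n → Fin d → ℝ) × (Fin n → ℝ)) |
          est (ω.2.1, fun i => signFun ((∑ j, ω.2.1 i j * ω.1 j) + ω.2.2 i)) ≠ ω.1} := by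
  have hN : 2 ^ (4 * n + 2) ≤ d.choose s * s.choose (s / 2) :=
    Nat.two_pow_le_of_mul_log_two_le (by omega) (by push_cast at hbound ⊢; linarith)
  have hcard : 2 ^ (n + 1) ≤ (F3 d s ε).ncard :=
    (Nat.pow_le_pow_right two_pos (by omega)).trans
      (hN.trans (choose_mul_choose_le_ncard_F3 heven hε))
  have : IsProbabilityMeasure (uniformOn (F3 d s ε)) :=
    isProbabilityMeasure_uniformOn F3_finite
      (Set.nonempty_of_ncard_ne_zero ((Nat.two_pow_pos _).trans_le hcard).ne')
  -- instance search does not unify `gaussianReal ?m ?v` with the anonymous constructor `⟨σ ^ 2, _⟩`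
  have : IsProbabilityMeasure (Measure.pi fun _ : Fin n => gaussianReal 0 ⟨σ ^ 2, sq_nonneg σ⟩) :=
    @Measure.pi.instIsProbabilityMeasure _ _ _ _ _ fun _ =>
      instIsProbabilityMeasureGaussianReal 0 _
  have hE : MeasurableSet {ω : (Fin d → ℝ) × ((Fin n → Fin d → ℝ) × (Fin n → ℝ)) |
      est (ω.2.1, fun i => signFun ((∑ j, ω.2.1 i j * ω.1 j) + ω.2.2 i)) ≠ ω.1} :=
    (measurableSet_eq_fun (hest.comp (by fun_prop)) measurable_fst).compl
  calc (1 / 2 : ℝ≥0∞) = 1 - 1 / 2 := by rw [one_div, ENNReal.one_sub_inv_two]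
    _ ≤ _ := one_sub_le_prod_apply_of_forall_slice_compl_le hE fun y => by
      simpa only [Set.mem_ofPred_eq, not_not] using
        uniformOn_signFun_recovered_le_half F3_finite hcard est y.1 y.2

theorem onebit_cs_exact_recovery_lower_bound
    (n d s : ℕ) (hn : 1 ≤ n) (heven : Even s) (hs2 : 2 ≤ s) (hsd : s ≤ d)
    (ε σ : ℝ) (hε : 0 < ε) (hσ : 0 < σ)
    (hbound : 2 * (n : ℝ) * Real.log 2 + Real.log 2 ≤
      (1 / 2) * Real.log ((d.choose s : ℝ) * (s.choose (s / 2) : ℝ)))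
    (est : (Fin n → Fin d → ℝ) × (Fin n → ℝ) → (Fin d → ℝ))
    (hest : Measurable est) :
    (1 / 2 : ℝ≥0∞) ≤
      ((uniformOn (F3 d s ε)).prod
          ((Measure.pi fun _ : Fin n => Measure.pi fun _ : Fin d =>
              gaussianReal 0 (1 / (n : ℝ≥0))).prod
            (Measure.pi fun _ : Fin n => gaussianReal 0 ⟨σ ^ 2, sq_nonneg σ⟩)))
        {ω : (Fin d → ℝ) × ((Fin n → Fin d → ℝ) × (Fin n → ℝ)) |
          est (ω.2.1, fun i => signFun ((∑ j, ω.2.1 i j * ω.1 j) + ω.2.2 i)) ≠ ω.1} :=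
  onebit_cs_exact_recovery_lower_bound_general n d s heven ε σ hε hbound est hest
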